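/- There do not exist smooth functions f, φ : (a,b) → ℝ with (a,b) nonempty, f > 0, sin φ never zero, φ' never zero, satisfying simultaneously φ' = -sin φ/(2f) and f/sin φ + λ f sin φ = 0 for some real constant λ. -/

import Mathlib

open Real Set

theorem stmt_4 :
    ¬ ∃ (a b lam : ℝ) (f φ : ℝ → ℝ), a < b ∧
      ContDiffOn ℝ (⊤ : ℕ∞) f (Ioo a b) ∧ ContDiffOn ℝ (⊤ : ℕ∞) φ (Ioo a b) ∧
      (∀ s ∈ Ioo a b, 0 < f s) ∧
      (∀ s ∈ Ioo a b, Real.sin (φ s) ≠ 0) ∧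
      (∀ s ∈ Ioo a b, deriv φ s ≠ 0) ∧
      (∀ s ∈ Ioo a b, deriv φ s = -Real.sin (φ s) / (2 * f s)) ∧
      (∀ s ∈ Ioo a b, f s / Real.sin (φ s) + lam * f s * Real.sin (φ s) = 0) := by
  rintro ⟨a, b, lam, f, φ, hab, hf, hφ, hfpos, hsin, hφ', -, heq2⟩
  -- Step 1: 1 + lam * sin² = 0 on Ioo, i.e. sin(φ s)^2 = -1/lam (constant)
  have hkey : ∀ s ∈ Ioo a b, lam * Real.sin (φ s) ^ 2 = -1 := by
    intro s hs
    have h1 := heq2 s hs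
    have h2 := hsin s hs
    have h3 := (hfpos s hs).ne'
    field_simp at h1
    -- h1 : f s + lam * f s * sin² = 0 (some form)
    nlinarith [sq_nonneg (Real.sin (φ s)), hfpos s hs, sq_abs (Real.sin (φ s))]
  -- differentiability of φ at points of Ioo
  have hφd : ∀ s ∈ Ioo a b, HasDerivAt φ (deriv φ s) s := by
    intro s hs
    exact (((hφ.differentiableOn (by simp)).differentiableAt
      (isOpen_Ioo.mem_nhds hs))).hasDerivAt
  have hlam : lam ≠ 0 := by
    obtain ⟨s, hs⟩ := nonempty_Ioo.mpr hab
    intro h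
    have := hkey s hs
    rw [h] at this
    norm_num at this
  -- Step 2: cos(φ s) = 0 on Ioo
  have hcos : ∀ s ∈ Ioo a b, Real.cos (φ s) = 0 := by
    intro s hs
    have hD : HasDerivAt (fun t => Real.sin (φ t) ^ 2)
        (2 * Real.sin (φ s) ^ 1 * (Real.cos (φ s) * deriv φ s)) s :=
      (((Real.hasDerivAt_sin (φ s)).comp s (hφd s hs))).pow 2
    have hconst : (fun t => Real.sin (φ t) ^ 2) =ᶠ[nhds s] fun _ => -1 / lam := by
      filter_upwards [isOpen_Ioo.mem_nhds hs] with t ht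
      have := hkey t ht
      field_simp
      linarith
    have h0 : deriv (fun t => Real.sin (φ t) ^ 2) s = 0 := by
      rw [hconst.deriv_eq]; simp
    rw [hD.deriv] at h0
    have := hsin s hs
    have := hφ' s hs
    simp only [pow_one] at h0
    rcases mul_eq_zero.mp h0 with h | h
    · rcases mul_eq_zero.mp h with h' | h'
      · norm_num at h'
      · exact absurd h' ‹Real.sin (φ s) ≠ 0›
    · rcases mul_eq_zero.mp h with h' | h'
      · exact h'
      · exact absurd h' ‹deriv φ s ≠ 0›
  -- Step 3: differentiate cos(φ t) = 0
  obtain ⟨s, hs⟩ := nonempty_Ioo.mpr hab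
  have hD : HasDerivAt (fun t => Real.cos (φ t)) (-Real.sin (φ s) * deriv φ s) s :=
    (Real.hasDerivAt_cos (φ s)).comp s (hφd s hs)
  have hconst : (fun t => Real.cos (φ t)) =ᶠ[nhds s] fun _ => (0 : ℝ) := by
    filter_upwards [isOpen_Ioo.mem_nhds hs] with t ht
    exact hcos t ht
  have h0 : deriv (fun t => Real.cos (φ t)) s = 0 := by
    rw [hconst.deriv_eq]; simp
  rw [hD.deriv] at h0
  rcases mul_eq_zero.mp h0 with h | h
  · exact hsin s hs (by linarith [neg_eq_zero.mp h])
  · exact hφ' s hs h
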